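/- arXiv:1709.00582 — 2 statements merged into one kernel-verified Lean document; each statement's English description precedes it below -/
import Mathlib

section
/- Radon–Nikodym derivative of the FK measure with field with respect to the one without field (finite-graph version of Proposition 3.1 and of Proposition A in the Appendix): for every internal configuration ω̃ ∈ {0,1}^E, P̃_{J,H}(ω̃) = P̃_{J,0}(ω̃) · ( ∏_{C a cluster of ω̃} cosh(H(C)) ) / E_{P̃_{J,0}}[ ∏_{C a cluster of ·} cosh(H(C)) ]. -/
open scoped Classical

namespace FK

variable {V : Type*} [Fintype V] [DecidableEq V]

/-- Internal bond configurations on the edge set `E`. -/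
abbrev Config (E : Finset (Sym2 V)) : Type _ := {e : Sym2 V // e ∈ E} → Bool

/-- Full bond configurations: internal edges together with the ghost edges
(one for each vertex). -/
abbrev GConfig (E : Finset (Sym2 V)) : Type _ := Config E × (V → Bool)

/-- Two vertices are adjacent if they are distinct and joined by an open internal edge. -/
def adj (E : Finset (Sym2 V)) (ω : Config E) (u v : V) : Prop :=
  u ≠ v ∧ ∃ h : s(u, v) ∈ E, ω ⟨s(u, v), h⟩ = true

/-- The same-cluster relation of an internal configuration. -/
def conn (E : Finset (Sym2 V)) (ω : Config E) (u v : V) : Prop :=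
  Relation.ReflTransGen (adj E ω) u v

/-- The cluster of a vertex. -/
noncomputable def cluster (E : Finset (Sym2 V)) (ω : Config E) (v : V) : Finset V :=
  Finset.univ.filter (fun u => conn E ω v u)

/-- The set of clusters (connected components) of an internal configuration. -/
noncomputable def clusters (E : Finset (Sym2 V)) (ω : Config E) : Finset (Finset V) :=
  Finset.univ.image (cluster E ω)

/-- Adjacency in the extended graph, where `none` is the ghost vertex `g`. -/
def adjG (E : Finset (Sym2 V)) (ω : GConfig E) : Option V → Option V → Prop
  | some u, some v => adj E ω.1 u v
  | some u, none => ω.2 u = true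
  | none, some v => ω.2 v = true
  | none, none => False

/-- Connectivity in the extended graph (with the ghost vertex `none`). -/
def connG (E : Finset (Sym2 V)) (ω : GConfig E) (x y : Option V) : Prop :=
  Relation.ReflTransGen (adjG E ω) x y

/-- Number of connected components of the extended graph not containing the ghost. -/
noncomputable def kGhost (E : Finset (Sym2 V)) (ω : GConfig E) : ℕ :=
  (((Finset.univ : Finset V).filter (fun v => ¬ connG E ω (some v) none)).image
    (fun v => Finset.univ.filter (fun u : V => connG E ω (some v) (some u)))).card

/-- The product over internal edges of the usual FK edge weights. -/
noncomputable def edgeWeight (J : Sym2 V → ℝ) (E : Finset (Sym2 V)) (ω : Config E) : ℝ :=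
  ∏ e : {e : Sym2 V // e ∈ E},
    if ω e then 1 - Real.exp (-2 * J e.1) else Real.exp (-2 * J e.1)

/-- Unnormalized FK (q = 2) weight with ghost. -/
noncomputable def fkWeight (J : Sym2 V → ℝ) (H : V → ℝ) (E : Finset (Sym2 V))
    (ω : GConfig E) : ℝ :=
  2 ^ kGhost E ω * edgeWeight J E ω.1 *
    ∏ v, if ω.2 v then 1 - Real.exp (-2 * H v) else Real.exp (-2 * H v)

/-- The FK (q = 2) random-cluster measure with ghost. -/
noncomputable def fkProb (J : Sym2 V → ℝ) (H : V → ℝ) (E : Finset (Sym2 V))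
    (ω : GConfig E) : ℝ :=
  fkWeight J H E ω / ∑ ω' : GConfig E, fkWeight J H E ω'

/-- The marginal of the FK measure with ghost on the internal edges. -/
noncomputable def fkMarginal (J : Sym2 V → ℝ) (H : V → ℝ) (E : Finset (Sym2 V))
    (ωi : Config E) : ℝ :=
  ∑ ωg : V → Bool, fkProb J H E (ωi, ωg)

/-- Unnormalized zero-field random-cluster (q = 2) weight. -/
noncomputable def rcWeight (J : Sym2 V → ℝ) (E : Finset (Sym2 V)) (ω : Config E) : ℝ :=
  2 ^ (clusters E ω).card * edgeWeight J E ω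

/-- The zero-field random-cluster (q = 2) measure. -/
noncomputable def rcProb (J : Sym2 V → ℝ) (E : Finset (Sym2 V)) (ω : Config E) : ℝ :=
  rcWeight J E ω / ∑ ω' : Config E, rcWeight J E ω'

/-- The spin value (±1) of a Boolean. -/
def spin (b : Bool) : ℝ := if b then 1 else -1

/-- The product of the two spins at the endpoints of an (unordered) edge. -/
def pairSpin (σ : V → Bool) : Sym2 V → ℝ :=
  Sym2.lift ⟨fun u v => spin (σ u) * spin (σ v), fun u v => mul_comm _ _⟩

/-- Unnormalized Ising weight. -/
noncomputable def isingWeight (J : Sym2 V → ℝ) (H : V → ℝ) (E : Finset (Sym2 V))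
    (σ : V → Bool) : ℝ :=
  Real.exp ((∑ e ∈ E, J e * pairSpin σ e) + ∑ v, H v * spin (σ v))

/-- The Ising Gibbs measure. -/
noncomputable def isingProb (J : Sym2 V → ℝ) (H : V → ℝ) (E : Finset (Sym2 V))
    (σ : V → Bool) : ℝ :=
  isingWeight J H E σ / ∑ σ' : V → Bool, isingWeight J H E σ'

/-- Unnormalized Edwards–Sokal weight on pairs (spin configuration, bond configuration
with ghost); the ghost spin is `+1` (i.e. `true`). -/
noncomputable def esWeight (J : Sym2 V → ℝ) (H : V → ℝ) (E : Finset (Sym2 V))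
    (p : (V → Bool) × GConfig E) : ℝ :=
  (∏ e : {e : Sym2 V // e ∈ E},
      if p.2.1 e then
        (if ∀ u ∈ e.1, ∀ v ∈ e.1, p.1 u = p.1 v then 1 - Real.exp (-2 * J e.1) else 0)
      else Real.exp (-2 * J e.1))
  * ∏ v, if p.2.2 v then (if p.1 v = true then 1 - Real.exp (-2 * H v) else 0)
         else Real.exp (-2 * H v)

/-- The Edwards–Sokal coupling measure. -/
noncomputable def esProb (J : Sym2 V → ℝ) (H : V → ℝ) (E : Finset (Sym2 V))
    (p : (V → Bool) × GConfig E) : ℝ :=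
  esWeight J H E p / ∑ p' : (V → Bool) × GConfig E, esWeight J H E p'

end FK

/-!
Given the internal configuration `ω̃`, a vertex is joined to the ghost exactly when some ghost
edge of its cluster is open, so `k(ω)` counts the clusters of `ω̃` whose ghost edges are all
closed. The ghost part of the weight therefore factorises over the clusters `C` of `ω̃`, and
summing out the ghost edges of `C` gives `2 e^{-2H(C)} + (1 - e^{-2H(C)}) = 2 e^{-H(C)} cosh H(C)`.
Hence the marginal weight of `ω̃` is `e^{-∑ H}` times its zero-field weight `2^{k̃(ω̃)} ∏ …`
times `∏_C cosh H(C)`, and normalising gives the claim.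
-/

theorem Real.one_add_exp_neg_two_mul (h : ℝ) :
    1 + Real.exp (-2 * h) = 2 * Real.exp (-h) * Real.cosh h := by
  have hinv : Real.exp (-h) * Real.exp h = 1 := by
    rw [← Real.exp_add, neg_add_cancel, Real.exp_zero]
  have hsq : Real.exp (-h) * Real.exp (-h) = Real.exp (-2 * h) := by
    rw [← Real.exp_add]; ring_nf
  rw [Real.cosh_eq]
  linear_combination -hinv - hsq

namespace Finpartition

variable {ι R : Type*} [DecidableEq ι] {s : Finset ι} (P : Finpartition s)

@[to_additive]
theorem prod_parts_prod [CommMonoid R] (f : ι → R) :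
    ∏ C ∈ P.parts, ∏ i ∈ C, f i = ∏ i ∈ s, f i := by
  calc _ = ∏ i ∈ P.parts.biUnion id, f i := (Finset.prod_biUnion P.disjoint).symm
    _ = _ := by rw [P.biUnion_parts]

theorem prod_parts_mul_prod_sdiff_parts [CommMonoid R] {S : Finset (Finset ι)}
    (hS : S ⊆ P.parts) (f g : ι → R) :
    (∏ C ∈ S, ∏ i ∈ C, f i) * ∏ C ∈ P.parts \ S, ∏ i ∈ C, g i =
      ∏ i ∈ s, if i ∈ S.biUnion id then f i else g i := by
  rw [← P.prod_parts_prod, ← Finset.prod_sdiff hS, mul_comm]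
  congr 1
  · refine Finset.prod_congr rfl fun C hC => Finset.prod_congr rfl fun i hi => ?_
    obtain ⟨hCP, hCS⟩ := Finset.mem_sdiff.1 hC
    refine (if_neg fun hiS => hCS ?_).symm
    obtain ⟨D, hD, hiD⟩ := Finset.mem_biUnion.1 hiS
    rwa [P.eq_of_mem_parts hCP (hS hD) hi hiD]
  · refine Finset.prod_congr rfl fun C hC => Finset.prod_congr rfl fun i hi => ?_
    rw [if_pos (Finset.mem_biUnion.2 ⟨C, hC, hi⟩)]

theorem sum_pi_prod_parts_add [Fintype ι] {β : Type*} [Fintype β] [CommSemiring R]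
    (P : Finpartition (Finset.univ : Finset ι)) (f g : ι → β → R) :
    ∑ x : ι → β, ∏ C ∈ P.parts, (∏ i ∈ C, f i (x i) + ∏ i ∈ C, g i (x i)) =
      ∏ C ∈ P.parts, (∏ i ∈ C, ∑ b, f i b + ∏ i ∈ C, ∑ b, g i b) := by
  simp only [Finset.prod_add]
  calc _ = ∑ S ∈ P.parts.powerset, ∑ x : ι → β,
        ∏ i, if i ∈ S.biUnion id then f i (x i) else g i (x i) := by
        rw [Finset.sum_comm]
        refine Finset.sum_congr rfl fun S hS => Finset.sum_congr rfl fun x _ => ?_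
        exact P.prod_parts_mul_prod_sdiff_parts (Finset.mem_powerset.1 hS) _ _
    _ = _ := by
        refine Finset.sum_congr rfl fun S hS => ?_
        rw [P.prod_parts_mul_prod_sdiff_parts (Finset.mem_powerset.1 hS),
          ← Fintype.prod_sum (fun i b => if i ∈ S.biUnion id then f i b else g i b)]
        refine Finset.prod_congr rfl fun i _ => ?_
        split_ifs <;> rfl

end Finpartition

namespace FK

variable {V : Type*} {E : Finset (Sym2 V)}

instance (ω : Config E) : Std.Symm (adj E ω) where
  symm _ _ := by
    rintro ⟨hne, hmem, hω⟩
    refine ⟨hne.symm, ?_⟩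
    rw [Sym2.eq_swap]
    exact ⟨hmem, hω⟩

theorem conn_equivalence (ω : Config E) : Equivalence (conn E ω) :=
  ⟨fun _ => .refl, fun h => Std.Symm.symm (r := Relation.ReflTransGen (adj E ω)) _ _ h, .trans⟩

theorem connG_of_conn {ω : GConfig E} {u v : V} (h : conn E ω.1 u v) :
    connG E ω (some u) (some v) :=
  Relation.ReflTransGen.lift some (fun _ _ hab => hab) _ _ h

theorem exists_ghost_or_conn_of_connG {ω : GConfig E} {v : V} {y : Option V}
    (h : connG E ω (some v) y) :
    (∃ w, conn E ω.1 v w ∧ ω.2 w = true) ∨ ∃ u, y = some u ∧ conn E ω.1 v u := by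
  induction h with
  | refl => exact Or.inr ⟨v, rfl, .refl⟩
  | @tail b c _ hbc ih =>
    rcases ih with hghost | ⟨u, rfl, hvu⟩
    · exact Or.inl hghost
    · cases c with
      | none => exact Or.inl ⟨u, hvu, hbc⟩
      | some w => exact Or.inr ⟨w, rfl, hvu.tail hbc⟩

theorem connG_ghost_iff {ω : GConfig E} {v : V} :
    connG E ω (some v) none ↔ ∃ u, conn E ω.1 v u ∧ ω.2 u = true := by
  refine ⟨fun h => ?_, fun ⟨u, hvu, hu⟩ => (connG_of_conn hvu).tail hu⟩
  simpa using exists_ghost_or_conn_of_connG h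

theorem connG_some_iff {ω : GConfig E} {u v : V} (hv : ¬ connG E ω (some v) none) :
    connG E ω (some v) (some u) ↔ conn E ω.1 v u := by
  refine ⟨fun h => ?_, connG_of_conn⟩
  rw [connG_ghost_iff] at hv
  simpa [hv] using exists_ghost_or_conn_of_connG h

theorem edgeWeight_nonneg {J : Sym2 V → ℝ} (hJ : ∀ e ∈ E, 0 ≤ J e) (ω : Config E) :
    0 ≤ edgeWeight J E ω := by
  refine Finset.prod_nonneg fun e _ => ?_
  split_ifs
  · have : Real.exp (-2 * J e.1) ≤ 1 := Real.exp_le_one_iff.2 (by linarith [hJ e.1 e.2])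
    linarith
  · positivity

noncomputable def ghostEdgeWeight (h : ℝ) (b : Bool) : ℝ :=
  if b then 1 - Real.exp (-2 * h) else Real.exp (-2 * h)

variable [Fintype V] [DecidableEq V]

def clusterSetoid (ω : Config E) : Setoid V := ⟨conn E ω, conn_equivalence ω⟩

noncomputable def clusterPartition (ω : Config E) : Finpartition (Finset.univ : Finset V) :=
  Finpartition.ofSetoid (clusterSetoid ω)

theorem clusterPartition_parts (ω : Config E) : (clusterPartition ω).parts = clusters E ω := rfl

theorem kGhost_eq_card_filter_clusters (ωi : Config E) (ωg : V → Bool) :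
    kGhost E (ωi, ωg) = ((clusters E ωi).filter (fun C => ∀ v ∈ C, ωg v = false)).card := by
  have hclosed : ∀ v,
      ¬ connG E (ωi, ωg) (some v) none ↔ ∀ u ∈ cluster E ωi v, ωg u = false := by
    intro v
    simp [connG_ghost_iff, cluster]
  rw [kGhost, clusters, Finset.filter_image, Finset.filter_congr fun v _ => hclosed v]
  refine congrArg _ (Finset.image_congr fun v hv => ?_)
  ext u
  simp [cluster, connG_some_iff ((hclosed v).2 (Finset.mem_filter.1 hv).2)]

theorem prod_ghostEdgeWeight_add_prod_closed (H : V → ℝ) (ωg : V → Bool) (C : Finset V) :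
    ∏ v ∈ C, ghostEdgeWeight (H v) (ωg v) +
        ∏ v ∈ C, (if ωg v then 0 else Real.exp (-2 * H v)) =
      (if ∀ v ∈ C, ωg v = false then 2 else 1) * ∏ v ∈ C, ghostEdgeWeight (H v) (ωg v) := by
  split_ifs with hC
  · rw [two_mul]
    congr 1
    refine Finset.prod_congr rfl fun v hv => ?_
    simp [ghostEdgeWeight, hC v hv]
  · obtain ⟨v, hv, hωv⟩ := not_forall₂.1 hC
    have hclosed : ∏ v ∈ C, (if ωg v then 0 else Real.exp (-2 * H v)) = 0 :=
      Finset.prod_eq_zero hv (by simpa using hωv)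
    rw [hclosed, add_zero, one_mul]

/- Writing `2 ^ [C closed] = 1 + [C closed]` makes each cluster factor a sum of two products
over its vertices, the shape summed by `Finpartition.sum_pi_prod_parts_add`. -/
theorem fkWeight_eq_edgeWeight_mul_prod_clusters (J : Sym2 V → ℝ) (H : V → ℝ)
    (ωi : Config E) (ωg : V → Bool) :
    fkWeight J H E (ωi, ωg) = edgeWeight J E ωi * ∏ C ∈ clusters E ωi,
      (∏ v ∈ C, ghostEdgeWeight (H v) (ωg v) +
        ∏ v ∈ C, (if ωg v then 0 else Real.exp (-2 * H v))) := by
  rw [Finset.prod_congr rfl fun C _ => prod_ghostEdgeWeight_add_prod_closed H ωg C,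
    Finset.prod_mul_distrib, Finset.prod_ite, Finset.prod_const, Finset.prod_const_one, mul_one,
    ← clusterPartition_parts, (clusterPartition ωi).prod_parts_prod, fkWeight,
    kGhost_eq_card_filter_clusters, clusterPartition_parts]
  simp only [ghostEdgeWeight]
  ring

theorem sum_fkWeight_ghost (J : Sym2 V → ℝ) (H : V → ℝ) (ωi : Config E) :
    ∑ ωg, fkWeight J H E (ωi, ωg) =
      Real.exp (-∑ v, H v) *
        (rcWeight J E ωi * ∏ C ∈ clusters E ωi, Real.cosh (∑ v ∈ C, H v)) := by
  simp only [fkWeight_eq_edgeWeight_mul_prod_clusters, ← Finset.mul_sum]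
  rw [← clusterPartition_parts, Finpartition.sum_pi_prod_parts_add _
    (fun v b => ghostEdgeWeight (H v) b) (fun v b => if b then 0 else Real.exp (-2 * H v))]
  have hcluster : ∀ C : Finset V, ∏ v ∈ C, ∑ b, ghostEdgeWeight (H v) b +
      ∏ v ∈ C, ∑ b : Bool, (if b then 0 else Real.exp (-2 * H v)) =
      2 * Real.exp (-∑ v ∈ C, H v) * Real.cosh (∑ v ∈ C, H v) := by
    intro C
    have hopen : ∀ v, ∑ b, ghostEdgeWeight (H v) b = 1 := by simp [ghostEdgeWeight]
    have hclosed : ∀ v,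
        ∑ b : Bool, (if b then 0 else Real.exp (-2 * H v)) = Real.exp (-2 * H v) := by
      simp
    simp only [hopen, hclosed, Finset.prod_const_one, ← Real.exp_sum, ← Finset.mul_sum]
    exact Real.one_add_exp_neg_two_mul _
  rw [Finset.prod_congr rfl fun C _ => hcluster C, Finset.prod_mul_distrib,
    Finset.prod_mul_distrib, Finset.prod_const, ← Real.exp_sum, Finset.sum_neg_distrib,
    (clusterPartition ωi).sum_parts_sum, clusterPartition_parts, rcWeight]
  ring

theorem fkMarginal_eq (J : Sym2 V → ℝ) (H : V → ℝ) (ωi : Config E) :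
    fkMarginal J H E ωi =
      rcWeight J E ωi * (∏ C ∈ clusters E ωi, Real.cosh (∑ v ∈ C, H v)) /
        ∑ ω : Config E, rcWeight J E ω * ∏ C ∈ clusters E ω, Real.cosh (∑ v ∈ C, H v) := by
  simp only [fkMarginal, fkProb, ← Finset.sum_div, Fintype.sum_prod_type, sum_fkWeight_ghost,
    ← Finset.mul_sum]
  exact mul_div_mul_left _ _ (Real.exp_pos _).ne'

theorem sum_rcWeight_pos {J : Sym2 V → ℝ} (hJ : ∀ e ∈ E, 0 ≤ J e) :
    0 < ∑ ω : Config E, rcWeight J E ω := by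
  refine Finset.sum_pos' (fun ω _ => mul_nonneg (by positivity) (edgeWeight_nonneg hJ ω))
    ⟨fun _ => false, Finset.mem_univ _, ?_⟩
  simp only [rcWeight, edgeWeight, Bool.false_eq_true, if_false]
  positivity

end FK

theorem fk_radon_nikodym_general
    {V : Type*} [Fintype V] [DecidableEq V]
    (E : Finset (Sym2 V))
    (J : Sym2 V → ℝ) (hJ : ∀ e ∈ E, 0 ≤ J e)
    (H : V → ℝ) :
    ∀ ωi : FK.Config E,
      FK.fkMarginal J H E ωi =
        FK.rcProb J E ωi *
          (∏ C ∈ FK.clusters E ωi, Real.cosh (∑ v ∈ C, H v)) /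
          ∑ ω' : FK.Config E, FK.rcProb J E ω' *
            ∏ C ∈ FK.clusters E ω', Real.cosh (∑ v ∈ C, H v) := by
  intro ωi
  simp only [FK.fkMarginal_eq, FK.rcProb, div_mul_eq_mul_div, ← Finset.sum_div]
  rw [div_div_div_cancel_right₀ (FK.sum_rcWeight_pos hJ).ne']

/-- Radon–Nikodym derivative of the FK measure with field
with respect to the one without field. -/
theorem fk_radon_nikodym
    {V : Type*} [Fintype V] [DecidableEq V]
    (E : Finset (Sym2 V)) (hE : ∀ e ∈ E, ¬ e.IsDiag)
    (J : Sym2 V → ℝ) (hJ : ∀ e ∈ E, 0 ≤ J e)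
    (H : V → ℝ) (hH : ∀ v, 0 ≤ H v) :
    ∀ ωi : FK.Config E,
      FK.fkMarginal J H E ωi =
        FK.rcProb J E ωi *
          (∏ C ∈ FK.clusters E ωi, Real.cosh (∑ v ∈ C, H v)) /
          ∑ ω' : FK.Config E, FK.rcProb J E ω' *
            ∏ C ∈ FK.clusters E ω', Real.cosh (∑ v ∈ C, H v) :=
  fk_radon_nikodym_general E J hJ H
end

section
/- Edwards–Sokal theorem on a finite graph with ghost: the spin marginal of the Edwards–Sokal coupling P̂^{ES}_{J,H} (the pushforward under (σ,ω) ↦ σ) equals the Ising Gibbs measure P_{J,H}, and its bond marginal (the pushforward under (σ,ω) ↦ ω) equals the FK random-cluster measure with ghost P̂_{J,H}. -/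
open scoped Classical

/-! The weight of the coupling vanishes unless the spins are constant on the clusters of the
graph with ghost and equal to `+1` on the cluster of the ghost; for such pairs it is the
product of the bond weights. Summing over spins therefore counts the admissible spin
configurations, which are free choices of one sign per ghost-free cluster: `2 ^ kGhost`.
Summing over bonds instead factorises over edges, and each edge contributes
`(1 - e^{-2K}) 1{σ_u = σ_v} + e^{-2K} = e^{K σ_u σ_v - K}`, which is the Ising weight up to a
constant independent of `σ`. -/

theorem sum_prod_apply_mul_prod_apply {ι κ β γ R : Type*} [Fintype ι] [DecidableEq ι]
    [Fintype κ] [DecidableEq κ] [Fintype β] [Fintype γ] [CommSemiring R]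
    (f : ι → β → R) (g : κ → γ → R) :
    ∑ x : (ι → β) × (κ → γ), (∏ i, f i (x.1 i)) * ∏ j, g j (x.2 j)
      = (∏ i, ∑ b, f i b) * ∏ j, ∑ c, g j c := by
  rw [Fintype.sum_prod_type, Fintype.prod_sum, Fintype.prod_sum, Fintype.sum_mul_sum]

theorem sum_div_sum_eq_of_sum_eq_mul {α β : Type*} [Fintype α] [Fintype β]
    (w : α → β → ℝ) (f : α → ℝ) {c : ℝ} (hc : c ≠ 0) (hw : ∀ a, ∑ b, w a b = c * f a)
    (a : α) :
    ∑ b, w a b / ∑ a', ∑ b', w a' b' = f a / ∑ a', f a' := by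
  simp only [← Finset.sum_div, hw, ← Finset.mul_sum, mul_div_mul_left _ _ hc]

namespace FK

/-- The Edwards–Sokal weight `w_e` of a bond with coupling `K` in state `b`, where `c` says that
the spins at its two ends agree. -/
noncomputable def bondWeight (K : ℝ) (c : Prop) [Decidable c] (b : Bool) : ℝ :=
  if b then (if c then 1 - Real.exp (-2 * K) else 0) else Real.exp (-2 * K)

theorem bondWeight_eq_ite (K : ℝ) (c : Prop) [Decidable c] (b : Bool) :
    bondWeight K c b
      = if b → c then (if b then 1 - Real.exp (-2 * K) else Real.exp (-2 * K)) else 0 := by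
  cases b <;> by_cases c <;> simp [bondWeight, *]

theorem sum_bondWeight (K : ℝ) (c : Prop) [Decidable c] :
    ∑ b, bondWeight K c b = Real.exp (K * (if c then 1 else -1) - K) := by
  by_cases hc : c <;> simp [bondWeight, hc]
  ring_nf

variable {V : Type*} {E : Finset (Sym2 V)} {ω : GConfig E}

instance : Std.Symm (adjG E ω) where
  symm
    | some _, some _, ⟨hne, he, hω⟩ =>
      ⟨hne.symm, Sym2.eq_swap ▸ he, by simpa [Sym2.eq_swap] using hω⟩
    | some _, none, h => h
    | none, some _, h => h

theorem connG_symm {x y : Option V} (h : connG E ω x y) : connG E ω y x :=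
  Std.Symm.symm (r := Relation.ReflTransGen (adjG E ω)) _ _ h

def withGhost (σ : V → Bool) : Option V → Bool := fun x => x.elim true σ

def Compatible (E : Finset (Sym2 V)) (ω : GConfig E) (σ : V → Bool) : Prop :=
  ∀ x y, connG E ω x y → withGhost σ x = withGhost σ y

theorem compatible_iff_forall_adjG {σ : V → Bool} :
    Compatible E ω σ ↔ ∀ x y, adjG E ω x y → withGhost σ x = withGhost σ y := by
  refine ⟨fun h x y hxy => h x y (.single hxy), fun h x y hxy => ?_⟩
  induction hxy with
  | refl => rfl
  | tail _ hadj ih => exact ih.trans (h _ _ hadj)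

theorem mem_pair_forall_eq_iff {α β : Type*} (σ : α → β) (a b : α) :
    (∀ u ∈ s(a, b), ∀ v ∈ s(a, b), σ u = σ v) ↔ σ a = σ b := by
  simp [or_imp, forall_and, eq_comm]

theorem compatible_iff {σ : V → Bool} :
    Compatible E ω σ ↔
      (∀ e : {e : Sym2 V // e ∈ E}, ω.1 e = true → ∀ u ∈ e.1, ∀ v ∈ e.1, σ u = σ v) ∧
        ∀ v, ω.2 v = true → σ v = true := by
  rw [compatible_iff_forall_adjG]
  constructor
  · intro h
    refine ⟨fun ⟨e, he⟩ hω => ?_, fun v hv => h (some v) none hv⟩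
    induction e using Sym2.ind with
    | h a b =>
      rw [mem_pair_forall_eq_iff]
      rcases eq_or_ne a b with rfl | hab
      · rfl
      · exact h (some a) (some b) ⟨hab, he, hω⟩
  · rintro ⟨hE, hg⟩ (_ | u) (_ | v) hadj
    · exact hadj.elim
    · exact (hg v hadj).symm
    · exact hg u hadj
    · obtain ⟨-, he, hω⟩ := hadj
      exact (mem_pair_forall_eq_iff σ u v).1 (hE ⟨s(u, v), he⟩ hω)

variable [Fintype V]

noncomputable def clusterG (E : Finset (Sym2 V)) (ω : GConfig E) (v : V) : Finset V :=
  Finset.univ.filter (fun u => connG E ω (some v) (some u))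

theorem mem_clusterG {u v : V} : u ∈ clusterG E ω v ↔ connG E ω (some v) (some u) := by
  simp [clusterG]

theorem clusterG_eq_iff {u v : V} :
    clusterG E ω u = clusterG E ω v ↔ connG E ω (some u) (some v) := by
  refine ⟨fun h => mem_clusterG.1 (h ▸ mem_clusterG.2 .refl), fun h => Finset.ext fun w => ?_⟩
  simp only [mem_clusterG]
  exact ⟨(connG_symm h).trans, h.trans⟩

variable [DecidableEq V]

noncomputable def freeClusters (E : Finset (Sym2 V)) (ω : GConfig E) : Finset (Finset V) :=
  (Finset.univ.filter (fun v => ¬ connG E ω (some v) none)).image (clusterG E ω)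

theorem kGhost_eq_card_freeClusters : kGhost E ω = (freeClusters E ω).card := rfl

theorem clusterG_mem_freeClusters_iff {v : V} :
    clusterG E ω v ∈ freeClusters E ω ↔ ¬ connG E ω (some v) none := by
  simp only [freeClusters, Finset.mem_image, Finset.mem_filter, Finset.mem_univ, true_and,
    clusterG_eq_iff]
  exact ⟨fun ⟨w, hw, hwv⟩ hv => hw (hwv.trans hv), fun hv => ⟨v, hv, .refl⟩⟩

theorem exists_clusterG_eq {C : Finset V} (hC : C ∈ freeClusters E ω) :
    ∃ v, clusterG E ω v = C := by
  obtain ⟨v, -, hv⟩ := Finset.mem_image.1 hC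
  exact ⟨v, hv⟩

noncomputable def spinsOfClusters (f : freeClusters E ω → Bool) (v : V) : Bool :=
  Function.extend Subtype.val f (fun _ => true) (clusterG E ω v)

theorem spinsOfClusters_of_connG_none (f : freeClusters E ω → Bool) {v : V}
    (hv : connG E ω (some v) none) : spinsOfClusters f v = true :=
  Function.extend_apply' _ _ _ fun ⟨C, hC⟩ => clusterG_mem_freeClusters_iff.1 (hC ▸ C.2) hv

theorem compatible_spinsOfClusters (f : freeClusters E ω → Bool) :
    Compatible E ω (spinsOfClusters f) := by
  rw [compatible_iff_forall_adjG]
  rintro (_ | u) (_ | v) hadj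
  · exact hadj.elim
  · exact (spinsOfClusters_of_connG_none f (connG_symm (.single hadj))).symm
  · exact spinsOfClusters_of_connG_none f (.single hadj)
  · simp only [withGhost, Option.elim, spinsOfClusters, clusterG_eq_iff.2 (.single hadj)]

noncomputable def compatibleEquiv (E : Finset (Sym2 V)) (ω : GConfig E) :
    {σ : V → Bool // Compatible E ω σ} ≃ (freeClusters E ω → Bool) where
  toFun σ C := σ.1 (exists_clusterG_eq C.2).choose
  invFun f := ⟨spinsOfClusters f, compatible_spinsOfClusters f⟩
  left_inv := by
    rintro ⟨σ, hσ⟩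
    refine Subtype.ext (funext fun v => ?_)
    dsimp only
    by_cases hv : connG E ω (some v) none
    · exact (spinsOfClusters_of_connG_none _ hv).trans (hσ _ _ hv).symm
    · have hC := clusterG_mem_freeClusters_iff.2 hv
      have hrep := (exists_clusterG_eq hC).choose_spec
      simp only [spinsOfClusters]
      rw [← Subtype.coe_mk _ hC, Subtype.val_injective.extend_apply]
      exact hσ (some _) (some v) (clusterG_eq_iff.1 hrep)
  right_inv f := funext fun C => by
    simp only [spinsOfClusters, (exists_clusterG_eq C.2).choose_spec,
      Subtype.val_injective.extend_apply]

theorem card_compatible (E : Finset (Sym2 V)) (ω : GConfig E) :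
    Fintype.card {σ : V → Bool // Compatible E ω σ} = 2 ^ kGhost E ω := by
  rw [Fintype.card_congr (compatibleEquiv E ω), Fintype.card_fun, Fintype.card_bool,
    Fintype.card_coe, kGhost_eq_card_freeClusters]

noncomputable def fieldWeight (H : V → ℝ) (ωg : V → Bool) : ℝ :=
  ∏ v, if ωg v then 1 - Real.exp (-2 * H v) else Real.exp (-2 * H v)

theorem esWeight_eq_prod_bondWeight (J : Sym2 V → ℝ) (H : V → ℝ) (σ : V → Bool)
    (ω : GConfig E) :
    esWeight J H E (σ, ω) =
      (∏ e : {e : Sym2 V // e ∈ E}, bondWeight (J e) (∀ u ∈ e.1, ∀ v ∈ e.1, σ u = σ v) (ω.1 e)) *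
        ∏ v, bondWeight (H v) (σ v = true) (ω.2 v) :=
  rfl

theorem esWeight_eq_ite (J : Sym2 V → ℝ) (H : V → ℝ) (σ : V → Bool) (ω : GConfig E) :
    esWeight J H E (σ, ω) =
      if Compatible E ω σ then edgeWeight J E ω.1 * fieldWeight H ω.2 else 0 := by
  simp only [esWeight_eq_prod_bondWeight, bondWeight_eq_ite, Finset.prod_ite_zero,
    ite_zero_mul_ite_zero, compatible_iff, Finset.mem_univ, forall_const, edgeWeight, fieldWeight]

theorem sum_spins_esWeight (J : Sym2 V → ℝ) (H : V → ℝ) (ω : GConfig E) :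
    ∑ σ, esWeight J H E (σ, ω) = fkWeight J H E ω := by
  simp only [esWeight_eq_ite, ← Finset.sum_filter, Finset.sum_const, nsmul_eq_mul,
    ← Fintype.card_subtype, card_compatible, fkWeight, fieldWeight]
  push_cast
  ring

theorem pairSpin_eq_ite (σ : V → Bool) (e : Sym2 V) :
    pairSpin σ e = if ∀ u ∈ e, ∀ v ∈ e, σ u = σ v then 1 else -1 := by
  induction e using Sym2.ind with
  | h a b =>
    simp only [mem_pair_forall_eq_iff]
    cases ha : σ a <;> cases hb : σ b <;> simp [pairSpin, spin, ha, hb]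

theorem sum_bonds_esWeight (J : Sym2 V → ℝ) (H : V → ℝ) (σ : V → Bool) :
    ∑ ω : GConfig E, esWeight J H E (σ, ω)
      = Real.exp (-((∑ e ∈ E, J e) + ∑ v, H v)) * isingWeight J H E σ := by
  simp only [esWeight_eq_prod_bondWeight, sum_prod_apply_mul_prod_apply, sum_bondWeight,
    ← pairSpin_eq_ite]
  rw [← Real.exp_sum, ← Real.exp_sum, ← Real.exp_add, isingWeight, ← Real.exp_add,
    Finset.sum_coe_sort E (fun e => J e * pairSpin σ e - J e)]
  simp only [Finset.sum_sub_distrib, spin]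
  ring_nf

end FK

theorem edwards_sokal_marginals_general
    {V : Type*} [Fintype V] [DecidableEq V]
    (E : Finset (Sym2 V))
    (J : Sym2 V → ℝ)
    (H : V → ℝ) :
    (∀ σ : V → Bool,
        (∑ ω : FK.GConfig E, FK.esProb J H E (σ, ω)) = FK.isingProb J H E σ) ∧
    (∀ ω : FK.GConfig E,
        (∑ σ : V → Bool, FK.esProb J H E (σ, ω)) = FK.fkProb J H E ω) := by
  refine ⟨fun σ => ?_, fun ω => ?_⟩
  · simp only [FK.esProb, FK.isingProb]
    rw [Fintype.sum_prod_type (FK.esWeight J H E)]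
    exact sum_div_sum_eq_of_sum_eq_mul _ _ (Real.exp_ne_zero _) (FK.sum_bonds_esWeight J H) σ
  · simp only [FK.esProb, FK.fkProb]
    rw [Fintype.sum_prod_type_right (FK.esWeight J H E)]
    exact sum_div_sum_eq_of_sum_eq_mul (fun ω σ => FK.esWeight J H E (σ, ω)) _ one_ne_zero
      (fun ω => (FK.sum_spins_esWeight J H ω).trans (one_mul _).symm) ω

/-- the Edwards–Sokal coupling has the Ising measure as spin marginal
and the FK random-cluster measure with ghost as bond marginal. -/
theorem edwards_sokal_marginals
    {V : Type*} [Fintype V] [DecidableEq V]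
    (E : Finset (Sym2 V)) (hE : ∀ e ∈ E, ¬ e.IsDiag)
    (J : Sym2 V → ℝ) (hJ : ∀ e ∈ E, 0 ≤ J e)
    (H : V → ℝ) (hH : ∀ v, 0 ≤ H v) :
    (∀ σ : V → Bool,
        (∑ ω : FK.GConfig E, FK.esProb J H E (σ, ω)) = FK.isingProb J H E σ) ∧
    (∀ ω : FK.GConfig E,
        (∑ σ : V → Bool, FK.esProb J H E (σ, ω)) = FK.fkProb J H E ω) :=
  edwards_sokal_marginals_general E J H
end
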